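/- arXiv:1212.0417 — 2 statements merged into one kernel-verified Lean document; each statement's English description precedes it below -/
import Mathlib

section
/- Assume A is three times continuously differentiable on ℝⁿ∖{0}. Suppose (λ*, v*) is an eigenpair with ‖v*‖₂ = 1, σ ≠ λ*, and J(v*) − σI is invertible. Let s = +1 if σ < λ* and s = −1 if σ > λ*. Then, as v → v*, ‖φ(v) − s·v* − |λ* − σ|(I − v*v*ᵀ)(J(v*) − σI)⁻¹(v − v*)‖₂ = O(‖v − v*‖₂²). -/
/-!
Scale invariance of `A` makes `F(v) = A(v)v` positively homogeneous of degree one, so Euler's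
identity gives `J(v)v = F(v)` for `v ≠ 0`, and differentiating this identity at `v*` gives
`DJ(v*)[h] v* = 0`. Hence the derivative of `ψ(v) = (J(v) − σ)⁻¹v` at `v*` is just
`(J(v*) − σ)⁻¹`, and `ψ(v*) = (λ* − σ)⁻¹v*`. The derivative of `y ↦ y/‖y‖` at `c u` (`‖u‖ = 1`)
is `|c|⁻¹(I − uuᵀ)`, which yields `Dφ(v*)`; as `A` is `C³`, `φ` is `C²` near `v*`, so the
first-order Taylor remainder of `φ` is `O(‖v − v*‖²)`.
-/

open Matrix Asymptotics Topology
open scoped RealInnerProductSpace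

noncomputable def mvCLM {ι : Type*} [Fintype ι] [DecidableEq ι] (M : Matrix ι ι ℝ) :
    EuclideanSpace ℝ ι →L[ℝ] EuclideanSpace ℝ ι :=
  LinearMap.toContinuousLinearMap (Matrix.toEuclideanLin M)

noncomputable def invitPsi {n : ℕ} (J : EuclideanSpace ℝ (Fin n) → Matrix (Fin n) (Fin n) ℝ)
    (σ : ℝ) (v : EuclideanSpace ℝ (Fin n)) : EuclideanSpace ℝ (Fin n) :=
  mvCLM ((J v - σ • 1)⁻¹) v

noncomputable def invitPhi {n : ℕ} (J : EuclideanSpace ℝ (Fin n) → Matrix (Fin n) (Fin n) ℝ)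
    (σ : ℝ) (v : EuclideanSpace ℝ (Fin n)) : EuclideanSpace ℝ (Fin n) :=
  ‖invitPsi J σ v‖⁻¹ • invitPsi J σ v

noncomputable def rayQuot {n : ℕ} (A : EuclideanSpace ℝ (Fin n) → Matrix (Fin n) (Fin n) ℝ)
    (v : EuclideanSpace ℝ (Fin n)) : ℝ :=
  ⟪v, mvCLM (A v) v⟫ / ⟪v, v⟫

theorem map_ringInverse {R S F : Type*} [Semiring R] [Semiring S] [EquivLike F R S]
    [RingEquivClass F R S] (f : F) (x : R) : f (Ring.inverse x) = Ring.inverse (f x) := by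
  by_cases hx : IsUnit x
  · calc f (Ring.inverse x) = Ring.inverse (f x) * (f x * f (Ring.inverse x)) :=
          (Ring.inverse_mul_cancel_left _ _ (hx.map f)).symm
      _ = Ring.inverse (f x) := by rw [← map_mul, Ring.mul_inverse_cancel x hx, map_one, mul_one]
  · rw [Ring.inverse_non_unit x hx, Ring.inverse_non_unit _ (by rwa [MulEquiv.isUnit_map]),
      map_zero]

theorem ContinuousLinearMap.ringInverse_apply_of_apply_eq_smul {𝕜 E : Type*} [NormedField 𝕜]
    [NormedAddCommGroup E] [NormedSpace 𝕜 E] {T : E →L[𝕜] E} (hT : IsUnit T) {μ : 𝕜} {x : E}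
    (hx : T x = μ • x) : Ring.inverse T x = μ⁻¹ • x := by
  have hback : x = μ • Ring.inverse T x := by
    rw [← map_smul, ← hx, ← mul_apply_eq_comp, Ring.inverse_mul_cancel T hT,
      one_apply_eq_self]
  rcases eq_or_ne μ 0 with rfl | hμ
  · rw [zero_smul] at hback
    rw [hback, map_zero, smul_zero]
  · rw [hback, inv_smul_smul₀ hμ, ← hback]

section mvCLM

variable {ι : Type*} [Fintype ι] [DecidableEq ι]

theorem mvCLM_eq_toEuclideanCLM (M : Matrix ι ι ℝ) :
    mvCLM M = Matrix.toEuclideanCLM (𝕜 := ℝ) M :=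
  rfl

theorem mvCLM_mul (M N : Matrix ι ι ℝ) : mvCLM (M * N) = (mvCLM M).comp (mvCLM N) := by
  simp only [mvCLM_eq_toEuclideanCLM, map_mul]
  rfl

theorem mvCLM_smul (c : ℝ) (M : Matrix ι ι ℝ) : mvCLM (c • M) = c • mvCLM M := by
  simp only [mvCLM_eq_toEuclideanCLM, map_smul]

theorem mvCLM_sub_smul_one (M : Matrix ι ι ℝ) (σ : ℝ) :
    mvCLM (M - σ • 1) = mvCLM M - σ • 1 := by
  simp [mvCLM_eq_toEuclideanCLM]

theorem mvCLM_nonsing_inv (M : Matrix ι ι ℝ) : mvCLM M⁻¹ = Ring.inverse (mvCLM M) := by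
  rw [Matrix.nonsing_inv_eq_ringInverse, mvCLM_eq_toEuclideanCLM, map_ringInverse]
  rfl

theorem mvCLM_one_sub_vecMulVec (u : EuclideanSpace ℝ ι) :
    mvCLM (1 - vecMulVec u u) = ContinuousLinearMap.id ℝ _ - (innerSL ℝ u).smulRight u := by
  ext v i
  simp [mvCLM_eq_toEuclideanCLM, Matrix.vecMulVec_mulVec, EuclideanSpace.inner_eq_star_dotProduct,
    dotProduct_comm, mul_comm]

theorem isUnit_mvCLM_iff {M : Matrix ι ι ℝ} : IsUnit (mvCLM M) ↔ IsUnit M := by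
  rw [mvCLM_eq_toEuclideanCLM, MulEquiv.isUnit_map]

theorem ContDiffOn.mvCLM {E : Type*} [NormedAddCommGroup E] [NormedSpace ℝ E]
    {A : E → Matrix ι ι ℝ} {s : Set E} {k : WithTop ℕ∞}
    (hA : ContDiffOn ℝ k (fun w i j => A w i j) s) : ContDiffOn ℝ k (fun w => mvCLM (A w)) s := by
  let f : (ι → ι → ℝ) →ₗ[ℝ] (EuclideanSpace ℝ ι →L[ℝ] EuclideanSpace ℝ ι) :=
    (Matrix.toEuclideanCLM (𝕜 := ℝ) (n := ι)).toAlgEquiv.toLinearMap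
  exact (LinearMap.toContinuousLinearMap f).contDiff.comp_contDiffOn hA

end mvCLM

section Calculus

variable {E F : Type*} [NormedAddCommGroup E] [NormedSpace ℝ E]
  [NormedAddCommGroup F] [NormedSpace ℝ F]

theorem ContDiffAt.isBigO_sub_sub_fderiv {f : E → F} {x : E} (hf : ContDiffAt ℝ 2 f x) :
    (fun y => f y - f x - fderiv ℝ f x (y - x)) =O[𝓝 x] fun y => ‖y - x‖ ^ 2 := by
  obtain ⟨C, hC0, hC⟩ :=
    ((hf.fderiv_right le_rfl).differentiableAt one_ne_zero).isBigO_sub.exists_pos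
  have hdiff : ∀ᶠ y in 𝓝 x, DifferentiableAt ℝ f y :=
    (hf.eventually (by simp)).mono fun y hy => hy.differentiableAt two_ne_zero
  obtain ⟨ε, hε, hball⟩ := Metric.eventually_nhds_iff_ball.mp (hC.bound.and hdiff)
  refine .of_bound C (Metric.eventually_nhds_iff_ball.mpr ⟨ε, hε, fun y hy => ?_⟩)
  have hseg : ∀ z ∈ segment ℝ x y, z ∈ Metric.ball x ε :=
    (convex_ball x ε).segment_subset (Metric.mem_ball_self hε) hy
  have := (convex_segment x y).norm_image_sub_le_of_norm_hasFDerivWithin_le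
    (f := fun z => f z - fderiv ℝ f x z) (C := C * ‖y - x‖)
    (fun z hz => ((hball z (hseg z hz)).2.hasFDerivAt.sub
      (fderiv ℝ f x).hasFDerivAt).hasFDerivWithinAt)
    (fun z hz => ((hball z (hseg z hz)).1).trans <| by
      gcongr
      exact norm_sub_le_of_mem_segment hz)
    (left_mem_segment ℝ x y) (right_mem_segment ℝ x y)
  rw [norm_pow, norm_norm, sq, ← mul_assoc]
  convert this using 2
  rw [map_sub]
  abel

theorem HasFDerivAt.apply_self_eq_of_homogeneous {f : E → F} {f' : E →L[ℝ] F} {x : E}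
    (hf : HasFDerivAt f f' x) (hhom : ∀ t : ℝ, 0 < t → f (t • x) = t • f x) : f' x = f x := by
  have hray : HasDerivAt (fun t : ℝ => t • x) x 1 := by
    simpa using (hasDerivAt_id (1 : ℝ)).smul_const x
  have h₁ : HasDerivAt (fun t : ℝ => f (t • x)) (f' x) 1 := by
    rw [← one_smul ℝ x] at hf
    exact hf.comp_hasDerivAt 1 hray
  have h₂ : HasDerivAt (fun t : ℝ => f (t • x)) (f x) 1 := by
    refine HasDerivAt.congr_of_eventuallyEq ?_
      ((eventually_gt_nhds one_pos).mono fun t ht => hhom t ht)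
    simpa using (hasDerivAt_id (1 : ℝ)).smul_const (f x)
  exact h₁.unique h₂

theorem HasFDerivAt.apply_apply_self_eq_zero_of_homogeneous {f : E → F} {L : E → E →L[ℝ] F}
    {L' : E →L[ℝ] E →L[ℝ] F} {x : E} (hL : HasFDerivAt L L' x)
    (hf : ∀ᶠ v in 𝓝 x, HasFDerivAt f (L v) v) (hhom : ∀ t : ℝ, 0 < t → ∀ v, f (t • v) = t • f v)
    (h : E) : L' h x = 0 := by
  have heuler : (fun v => L v v) =ᶠ[𝓝 x] f :=
    hf.mono fun v hv => hv.apply_self_eq_of_homogeneous fun t ht => hhom t ht v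
  have hsame := (hL.clm_apply (hasFDerivAt_id x)).unique
    (hf.self_of_nhds.congr_of_eventuallyEq heuler)
  simpa using DFunLike.congr_fun hsame h

theorem HasFDerivAt.ringInverse_apply_self [CompleteSpace E] {L : E → E →L[ℝ] E}
    {L' : E →L[ℝ] E →L[ℝ] E} {x : E} (hL : HasFDerivAt L L' x) (hx : IsUnit (L x))
    (hker : ∀ h, L' h (Ring.inverse (L x) x) = 0) :
    HasFDerivAt (fun v => Ring.inverse (L v) v) (Ring.inverse (L x)) x := by
  obtain ⟨U, hU⟩ := hx
  have hinv := hasFDerivAt_ringInverse (𝕜 := ℝ) U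
  rw [hU] at hinv
  refine ((hinv.comp x hL).clm_apply (hasFDerivAt_id x)).congr_fderiv ?_
  ext h
  simp [← Ring.inverse_unit, hU, hker]

end Calculus

section Normalize

variable {H : Type*} [NormedAddCommGroup H] [InnerProductSpace ℝ H]

theorem hasFDerivAt_norm {p : H} (hp : p ≠ 0) : HasFDerivAt (‖·‖) (‖p‖⁻¹ • innerSL ℝ p) p := by
  have hsq : ‖p‖ ^ 2 ≠ 0 := by positivity
  have h := (Real.hasDerivAt_sqrt hsq).comp_hasFDerivAt p (hasStrictFDerivAt_norm_sq p).hasFDerivAt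
  rw [show (√·) ∘ (fun y : H => ‖y‖ ^ 2) = (‖·‖) from
    funext fun y => Real.sqrt_sq (norm_nonneg y)] at h
  refine h.congr_fderiv ?_
  rw [Real.sqrt_sq (norm_nonneg p)]
  ext y
  simp
  field_simp

theorem contDiffAt_inv_norm_smul {p : H} (hp : p ≠ 0) {k : WithTop ℕ∞} :
    ContDiffAt ℝ k (fun y : H => ‖y‖⁻¹ • y) p :=
  ((contDiffAt_norm ℝ hp).inv (norm_ne_zero_iff.mpr hp)).smul contDiffAt_id

theorem hasFDerivAt_inv_norm_smul_smul {u : H} (hu : ‖u‖ = 1) {c : ℝ} (hc : c ≠ 0) :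
    HasFDerivAt (fun y : H => ‖y‖⁻¹ • y)
      (|c|⁻¹ • (ContinuousLinearMap.id ℝ H - (innerSL ℝ u).smulRight u)) (c • u) := by
  have hp : c • u ≠ 0 := smul_ne_zero hc (norm_ne_zero_iff.mp (by rw [hu]; exact one_ne_zero))
  have hnorm : ‖c • u‖ = |c| := by rw [norm_smul, hu, mul_one, Real.norm_eq_abs]
  have hinv : HasFDerivAt (fun y : H => ‖y‖⁻¹) _ (c • u) :=
    (hasDerivAt_inv (norm_ne_zero_iff.mpr hp)).comp_hasFDerivAt _ (hasFDerivAt_norm hp)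
  refine (hinv.smul (hasFDerivAt_id _)).congr_fderiv ?_
  ext h
  simp [hnorm]
  match_scalars <;> field_simp

end Normalize

theorem mvCLM_apply_self_smul {ι : Type*} [Fintype ι] [DecidableEq ι]
    {A : EuclideanSpace ℝ ι → Matrix ι ι ℝ}
    (hscale : ∀ α : ℝ, α ≠ 0 → ∀ v : EuclideanSpace ℝ ι, v ≠ 0 → A (α • v) = A v)
    {t : ℝ} (ht : t ≠ 0) (v : EuclideanSpace ℝ ι) :
    mvCLM (A (t • v)) (t • v) = t • mvCLM (A v) v := by
  rcases eq_or_ne v 0 with rfl | hv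
  · simp
  · rw [hscale t ht v hv, map_smul]

section InverseIteration

variable {n : ℕ} {J : EuclideanSpace ℝ (Fin n) → Matrix (Fin n) (Fin n) ℝ} {σ : ℝ}
  {x : EuclideanSpace ℝ (Fin n)}

theorem invitPsi_eq_ringInverse (v : EuclideanSpace ℝ (Fin n)) :
    invitPsi J σ v = Ring.inverse (mvCLM (J v) - σ • 1) v := by
  rw [invitPsi, mvCLM_nonsing_inv, mvCLM_sub_smul_one]

theorem invitPsi_of_apply_eq_smul (hinv : IsUnit (J x - σ • 1)) {μ : ℝ}
    (heig : mvCLM (J x) x = μ • x) : invitPsi J σ x = (μ - σ)⁻¹ • x := by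
  rw [invitPsi_eq_ringInverse]
  refine ContinuousLinearMap.ringInverse_apply_of_apply_eq_smul ?_ ?_
  · rwa [← mvCLM_sub_smul_one, isUnit_mvCLM_iff]
  · simp [heig, sub_smul]

theorem contDiffAt_invitPsi {k : WithTop ℕ∞} (hJ : ContDiffAt ℝ k (fun w => mvCLM (J w)) x)
    (hinv : IsUnit (J x - σ • 1)) : ContDiffAt ℝ k (invitPsi J σ) x := by
  rw [← isUnit_mvCLM_iff, mvCLM_sub_smul_one] at hinv
  have hR := contDiffAt_ringInverse ℝ (n := k) hinv.unit
  rw [hinv.unit_spec] at hR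
  rw [funext invitPsi_eq_ringInverse]
  exact (hR.comp x (hJ.sub contDiffAt_const)).clm_apply contDiffAt_id

theorem contDiffAt_invitPhi {k : WithTop ℕ∞} (hJ : ContDiffAt ℝ k (fun w => mvCLM (J w)) x)
    (hinv : IsUnit (J x - σ • 1)) (hψ : invitPsi J σ x ≠ 0) : ContDiffAt ℝ k (invitPhi J σ) x :=
  (contDiffAt_inv_norm_smul hψ).comp x (contDiffAt_invitPsi hJ hinv)

theorem hasFDerivAt_invitPsi {J' : EuclideanSpace ℝ (Fin n) →L[ℝ] _}
    (hJ : HasFDerivAt (fun w => mvCLM (J w)) J' x) (hinv : IsUnit (J x - σ • 1)) {μ : ℝ}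
    (heig : mvCLM (J x) x = μ • x) (hker : ∀ h, J' h x = 0) :
    HasFDerivAt (invitPsi J σ) (mvCLM (J x - σ • 1)⁻¹) x := by
  have hψx := invitPsi_of_apply_eq_smul hinv heig
  rw [invitPsi_eq_ringInverse] at hψx
  rw [← isUnit_mvCLM_iff, mvCLM_sub_smul_one] at hinv
  rw [mvCLM_nonsing_inv, mvCLM_sub_smul_one, funext invitPsi_eq_ringInverse]
  exact (hJ.sub_const (σ • 1)).ringInverse_apply_self hinv fun h => by simp [hψx, hker]

theorem invitPhi_of_apply_eq_smul (hx : ‖x‖ = 1) (hinv : IsUnit (J x - σ • 1)) {μ : ℝ}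
    (heig : mvCLM (J x) x = μ • x) : invitPhi J σ x = (|μ - σ| / (μ - σ)) • x := by
  rw [invitPhi, invitPsi_of_apply_eq_smul hinv heig, norm_smul, hx, mul_one, Real.norm_eq_abs,
    smul_smul, abs_inv, inv_inv, div_eq_mul_inv]

theorem hasFDerivAt_invitPhi {J' : EuclideanSpace ℝ (Fin n) →L[ℝ] _} (hx : ‖x‖ = 1)
    (hJ : HasFDerivAt (fun w => mvCLM (J w)) J' x) (hinv : IsUnit (J x - σ • 1)) {μ : ℝ}
    (heig : mvCLM (J x) x = μ • x) (hμ : μ ≠ σ) (hker : ∀ h, J' h x = 0) :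
    HasFDerivAt (invitPhi J σ)
      (mvCLM (|μ - σ| • ((1 - vecMulVec x x) * (J x - σ • 1)⁻¹))) x := by
  have hnormalize := hasFDerivAt_inv_norm_smul_smul hx (inv_ne_zero (sub_ne_zero.mpr hμ))
  rw [← invitPsi_of_apply_eq_smul hinv heig] at hnormalize
  have := hnormalize.comp x (hasFDerivAt_invitPsi hJ hinv heig hker)
  rwa [abs_inv, inv_inv, ContinuousLinearMap.smul_comp, ← mvCLM_one_sub_vecMulVec, ← mvCLM_mul,
    ← mvCLM_smul] at this

end InverseIteration

theorem stmt9_general {n : ℕ}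
    (A J : EuclideanSpace ℝ (Fin n) → Matrix (Fin n) (Fin n) ℝ)
    (hsmooth : ContDiffOn ℝ 3 (fun w i j => A w i j) {(0 : EuclideanSpace ℝ (Fin n))}ᶜ)
    (hscale : ∀ α : ℝ, α ≠ 0 → ∀ v : EuclideanSpace ℝ (Fin n), v ≠ 0 → A (α • v) = A v)
    (hJ : ∀ v : EuclideanSpace ℝ (Fin n), v ≠ 0 →
      HasFDerivAt (fun w => mvCLM (A w) w) (mvCLM (J v)) v)
    (lam σ : ℝ) (vstar : EuclideanSpace ℝ (Fin n)) (hnorm : ‖vstar‖ = 1)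
    (heig : mvCLM (A vstar) vstar = lam • vstar) (hσ : σ ≠ lam)
    (hinv : IsUnit (J vstar - σ • (1 : Matrix (Fin n) (Fin n) ℝ)))
    (s : ℝ) (hs₁ : σ < lam → s = 1) (hs₂ : lam < σ → s = -1) :
    (fun v => invitPhi J σ v - s • vstar -
        mvCLM (|lam - σ| •
          ((1 - Matrix.vecMulVec vstar vstar) * (J vstar - σ • 1)⁻¹)) (v - vstar))
      =O[nhds vstar] (fun v => ‖v - vstar‖ ^ 2) := by
  have hv : vstar ≠ 0 := by
    rintro rfl
    simp at hnorm
  have hJsmooth : ContDiffAt ℝ 2 (fun w => mvCLM (J w)) vstar :=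
    ((hsmooth.mvCLM.clm_apply contDiffOn_id).fderiv_of_isOpen isOpen_compl_singleton le_rfl
      |>.congr fun v hv => (hJ v hv).fderiv.symm).contDiffAt
      (isOpen_compl_singleton.mem_nhds hv)
  obtain ⟨J', hJ'⟩ := hJsmooth.differentiableAt two_ne_zero
  have hhom (t : ℝ) (ht : 0 < t) := mvCLM_apply_self_smul hscale ht.ne'
  have hJeig : mvCLM (J vstar) vstar = lam • vstar :=
    ((hJ vstar hv).apply_self_eq_of_homogeneous fun t ht => hhom t ht vstar).trans heig
  have hker := hJ'.apply_apply_self_eq_zero_of_homogeneous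
    ((eventually_ne_nhds hv).mono hJ) hhom
  have hφsmooth : ContDiffAt ℝ 2 (invitPhi J σ) vstar := contDiffAt_invitPhi hJsmooth hinv <| by
    rw [invitPsi_of_apply_eq_smul hinv hJeig]
    exact smul_ne_zero (inv_ne_zero (sub_ne_zero.mpr hσ.symm)) hv
  have hs : s = |lam - σ| / (lam - σ) := by
    rcases hσ.lt_or_gt with hlt | hgt
    · rw [hs₁ hlt, abs_of_pos (sub_pos.mpr hlt), div_self (sub_pos.mpr hlt).ne']
    · rw [hs₂ hgt, abs_of_neg (sub_neg.mpr hgt), neg_div, div_self (sub_neg.mpr hgt).ne]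
  have hφ := hasFDerivAt_invitPhi hnorm hJ' hinv hJeig hσ.symm hker
  simpa only [hφ.fderiv, invitPhi_of_apply_eq_smul hnorm hinv hJeig, hs] using
    hφsmooth.isBigO_sub_sub_fderiv

/-- First-order expansion of `φ` near an eigenvector: with
`s = +1` if `σ < λ*` and `s = −1` if `σ > λ*`, one has, as `v → v*`,
`φ(v) − s v* − |λ* − σ|(I − v*v*ᵀ)(J(v*) − σI)⁻¹(v − v*) = O(‖v − v*‖²)`. -/
theorem stmt9 {n : ℕ} (hn : 1 ≤ n)
    (A J : EuclideanSpace ℝ (Fin n) → Matrix (Fin n) (Fin n) ℝ)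
    (hsymm : ∀ v : EuclideanSpace ℝ (Fin n), v ≠ 0 → (A v).IsSymm)
    (hsmooth : ContDiffOn ℝ 3 (fun w i j => A w i j) {(0 : EuclideanSpace ℝ (Fin n))}ᶜ)
    (hscale : ∀ α : ℝ, α ≠ 0 → ∀ v : EuclideanSpace ℝ (Fin n), v ≠ 0 → A (α • v) = A v)
    (hJ : ∀ v : EuclideanSpace ℝ (Fin n), v ≠ 0 →
      HasFDerivAt (fun w => mvCLM (A w) w) (mvCLM (J v)) v)
    (lam σ : ℝ) (vstar : EuclideanSpace ℝ (Fin n)) (hnorm : ‖vstar‖ = 1)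
    (heig : mvCLM (A vstar) vstar = lam • vstar) (hσ : σ ≠ lam)
    (hinv : IsUnit (J vstar - σ • (1 : Matrix (Fin n) (Fin n) ℝ)))
    (s : ℝ) (hs₁ : σ < lam → s = 1) (hs₂ : lam < σ → s = -1) :
    (fun v => invitPhi J σ v - s • vstar -
        mvCLM (|lam - σ| •
          ((1 - Matrix.vecMulVec vstar vstar) * (J vstar - σ • 1)⁻¹)) (v - vstar))
      =O[nhds vstar] (fun v => ‖v - vstar‖ ^ 2) :=
  stmt9_general A J hsmooth hscale hJ lam σ vstar hnorm heig hσ hinv s hs₁ hs₂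
end

section
/- Suppose (λ*, y*) is an eigenpair with ‖y*‖₂ = 1 and set F(y*) := (I − y*y*ᵀ)(λ*I − J(y*)). Then: (i) the characteristic polynomial of F(y*) equals the characteristic polynomial of λ*I − J(y*); equivalently the complex eigenvalues of F(y*), counted with algebraic multiplicity, are exactly λ* − μ where μ ranges over the complex eigenvalues of J(y*); (ii) if λ* is an eigenvalue of J(y*) of algebraic multiplicity one and λ* < Re μ for every complex eigenvalue μ ≠ λ* of J(y*), then every nonzero complex eigenvalue of F(y*) has negative real part; (iii) if some complex eigenvalue μ of J(y*) satisfies Re μ < λ*, then F(y*) has a complex eigenvalue with positive real part. -/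
open Matrix Asymptotics Topology
open scoped RealInnerProductSpace

/-!
At the eigenvector, `J(y*) y* = λ* y*`: differentiate `t ↦ A(t y*)(t y*) = t A(y*) y*` at `t = 1`.
So `M := λ*I − J(y*)` kills `y*`, whence `M (I − y*y*ᵀ) = M`; since `PM` and `MP` always share
their characteristic polynomial, `F(y*) = (I − y*y*ᵀ) M` has that of `M`. The spectrum of
`F(y*)` is therefore `λ* − σ(J(y*))`, from which (ii) and (iii) are read off.
-/

theorem HasFDerivAt.apply_self_of_eventually_smul {E F : Type*} [NormedAddCommGroup E]
    [NormedSpace ℝ E] [NormedAddCommGroup F] [NormedSpace ℝ F] {f : E → F} {f' : E →L[ℝ] F}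
    {v : E} (hf : HasFDerivAt f f' v) (hhom : ∀ᶠ t in 𝓝 (1 : ℝ), f (t • v) = t • f v) :
    f' v = f v := by
  have hray : HasDerivAt (fun t : ℝ => t • v) v 1 := by
    simpa using (hasDerivAt_id (1 : ℝ)).smul_const v
  have hcomp : HasDerivAt (fun t : ℝ => f (t • v)) (f' v) 1 :=
    (one_smul ℝ v ▸ hf).comp_hasDerivAt 1 hray
  have hlin : HasDerivAt (fun t : ℝ => t • f v) (f v) 1 := by
    simpa using (hasDerivAt_id (1 : ℝ)).smul_const (f v)
  exact hcomp.unique (hlin.congr_of_eventuallyEq hhom)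

theorem Matrix.charpoly_one_sub_vecMulVec_mul {R m : Type*} [CommRing R] [Fintype m]
    [DecidableEq m] (M : Matrix m m R) {y : m → R} (hMy : M *ᵥ y = 0) (z : m → R) :
    ((1 - vecMulVec y z) * M).charpoly = M.charpoly := by
  rw [charpoly_mul_comm, Matrix.mul_sub, mul_one, mul_vecMulVec, hMy, zero_vecMulVec, sub_zero]

theorem Matrix.spectrum_map_eq_of_charpoly_eq {K L m : Type*} [Field K] [Field L] [Fintype m]
    [DecidableEq m] (f : K →+* L) {M N : Matrix m m K} (h : M.charpoly = N.charpoly) :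
    spectrum L (M.map f) = spectrum L (N.map f) := by
  ext μ
  rw [mem_spectrum_iff_isRoot_charpoly, mem_spectrum_iff_isRoot_charpoly, charpoly_map,
    charpoly_map, h]

theorem mvCLM_jacobian_self_of_scale_invariant {n : ℕ}
    {A J : EuclideanSpace ℝ (Fin n) → Matrix (Fin n) (Fin n) ℝ}
    (hscale : ∀ α : ℝ, α ≠ 0 → ∀ v : EuclideanSpace ℝ (Fin n), v ≠ 0 → A (α • v) = A v)
    {v : EuclideanSpace ℝ (Fin n)} (hv : v ≠ 0)
    (hJ : HasFDerivAt (fun w => mvCLM (A w) w) (mvCLM (J v)) v) :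
    mvCLM (J v) v = mvCLM (A v) v := by
  refine hJ.apply_self_of_eventually_smul ?_
  filter_upwards [isOpen_ne.mem_nhds one_ne_zero] with t ht
  rw [hscale t ht v hv, map_smul]

open scoped Pointwise

theorem stmt15_general {n : ℕ}
    (A J : EuclideanSpace ℝ (Fin n) → Matrix (Fin n) (Fin n) ℝ)
    (hscale : ∀ α : ℝ, α ≠ 0 → ∀ v : EuclideanSpace ℝ (Fin n), v ≠ 0 → A (α • v) = A v)
    (hJ : ∀ v : EuclideanSpace ℝ (Fin n), v ≠ 0 →
      HasFDerivAt (fun w => mvCLM (A w) w) (mvCLM (J v)) v)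
    (lam : ℝ) (ystar : EuclideanSpace ℝ (Fin n)) (hnorm : ‖ystar‖ = 1)
    (heig : mvCLM (A ystar) ystar = lam • ystar)
    (F : Matrix (Fin n) (Fin n) ℝ)
    (hF : F = (1 - Matrix.vecMulVec ystar ystar) *
      (lam • (1 : Matrix (Fin n) (Fin n) ℝ) - J ystar)) :
    (F.charpoly = (lam • (1 : Matrix (Fin n) (Fin n) ℝ) - J ystar).charpoly) ∧
    (((J ystar).map (Complex.ofReal)).charpoly.rootMultiplicity (lam : ℂ) = 1 →
      (∀ μ ∈ spectrum ℂ ((J ystar).map (Complex.ofReal)), μ ≠ (lam : ℂ) → lam < μ.re) →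
      ∀ ζ ∈ spectrum ℂ (F.map (Complex.ofReal)), ζ ≠ 0 → ζ.re < 0) ∧
    ((∃ μ ∈ spectrum ℂ ((J ystar).map (Complex.ofReal)), μ.re < lam) →
      ∃ ζ ∈ spectrum ℂ (F.map (Complex.ofReal)), 0 < ζ.re) := by
  have hy : ystar ≠ 0 := by rintro rfl; simp at hnorm
  have hJy : J ystar *ᵥ ystar = lam • ystar := congrArg WithLp.ofLp <|
    (mvCLM_jacobian_self_of_scale_invariant hscale hy (hJ ystar hy)).trans heig
  have hMy : (lam • (1 : Matrix (Fin n) (Fin n) ℝ) - J ystar) *ᵥ ystar = 0 := by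
    rw [sub_mulVec, smul_mulVec, one_mulVec, hJy, sub_self]
  have hchar : F.charpoly = (lam • (1 : Matrix (Fin n) (Fin n) ℝ) - J ystar).charpoly :=
    hF ▸ charpoly_one_sub_vecMulVec_mul _ hMy _
  have hspec : spectrum ℂ (F.map Complex.ofReal)
      = ({(lam : ℂ)} : Set ℂ) - spectrum ℂ ((J ystar).map Complex.ofReal) := by
    refine (spectrum_map_eq_of_charpoly_eq Complex.ofRealHom hchar).trans ?_
    rw [spectrum.singleton_sub_eq, algebraMap_eq_diagonal]
    change spectrum ℂ ((lam • 1 - J ystar).map Complex.ofReal) = _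
    rw [Matrix.map_sub _ Complex.ofReal_sub, smul_one_eq_diagonal,
      diagonal_map Complex.ofReal_zero]
    rfl
  refine ⟨hchar, fun _ hgap ζ hζ hζ0 => ?_, fun ⟨μ, hμ, hμlam⟩ => ⟨lam - μ, ?_, ?_⟩⟩
  · obtain ⟨_, rfl, μ, hμ, rfl⟩ := hspec ▸ hζ
    have := hgap μ hμ (by rintro rfl; simp at hζ0)
    simp only [Complex.sub_re, Complex.ofReal_re]
    linarith
  · exact hspec ▸ Set.sub_mem_sub rfl hμ
  · simp only [Complex.sub_re, Complex.ofReal_re]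
    linarith

/-- Properties of the linearization `F(y*) = (I − y*y*ᵀ)(λ*I − J(y*))`:
(i) its characteristic polynomial equals that of `λ*I − J(y*)` (so its complex eigenvalues,
with multiplicity, are the `λ* − μ` with `μ` an eigenvalue of `J(y*)`);
(ii) if `λ*` is algebraically simple for `J(y*)` and `λ* < Re μ` for all eigenvalues
`μ ≠ λ*`, then every nonzero complex eigenvalue of `F(y*)` has negative real part;
(iii) if some eigenvalue `μ` of `J(y*)` satisfies `Re μ < λ*`, then `F(y*)` has a complex
eigenvalue with positive real part. -/
theorem stmt15 {n : ℕ} (hn : 1 ≤ n)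
    (A J : EuclideanSpace ℝ (Fin n) → Matrix (Fin n) (Fin n) ℝ)
    (hsymm : ∀ v : EuclideanSpace ℝ (Fin n), v ≠ 0 → (A v).IsSymm)
    (hsmooth : ContDiffOn ℝ 1 (fun w i j => A w i j) {(0 : EuclideanSpace ℝ (Fin n))}ᶜ)
    (hscale : ∀ α : ℝ, α ≠ 0 → ∀ v : EuclideanSpace ℝ (Fin n), v ≠ 0 → A (α • v) = A v)
    (hJ : ∀ v : EuclideanSpace ℝ (Fin n), v ≠ 0 →
      HasFDerivAt (fun w => mvCLM (A w) w) (mvCLM (J v)) v)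
    (lam : ℝ) (ystar : EuclideanSpace ℝ (Fin n)) (hnorm : ‖ystar‖ = 1)
    (heig : mvCLM (A ystar) ystar = lam • ystar)
    (F : Matrix (Fin n) (Fin n) ℝ)
    (hF : F = (1 - Matrix.vecMulVec ystar ystar) *
      (lam • (1 : Matrix (Fin n) (Fin n) ℝ) - J ystar)) :
    (F.charpoly = (lam • (1 : Matrix (Fin n) (Fin n) ℝ) - J ystar).charpoly) ∧
    (((J ystar).map (Complex.ofReal)).charpoly.rootMultiplicity (lam : ℂ) = 1 →
      (∀ μ ∈ spectrum ℂ ((J ystar).map (Complex.ofReal)), μ ≠ (lam : ℂ) → lam < μ.re) →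
      ∀ ζ ∈ spectrum ℂ (F.map (Complex.ofReal)), ζ ≠ 0 → ζ.re < 0) ∧
    ((∃ μ ∈ spectrum ℂ ((J ystar).map (Complex.ofReal)), μ.re < lam) →
      ∃ ζ ∈ spectrum ℂ (F.map (Complex.ofReal)), 0 < ζ.re) :=
  stmt15_general A J hscale hJ lam ystar hnorm heig F hF
end
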